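/- The fiber product ring (K[x,y,z]/(z²−1)) ×_{K[x,y,z]/(z²−1,y)} K[t], where the first map is the quotient by y and the second sends t to the class of x, is isomorphic as a K-algebra to K[u,v,w]/(uv), via u ↦ (y(z−1), 0), v ↦ (y(z+1), 0), w ↦ (x, t). -/

import Mathlib

/-!
Since `2` is invertible, `z² − 1 = (z − 1)(z + 1)` with coprime factors, so a class in
`Ā = K[x,y,z]/(z² − 1)` is determined by its specialisations `z = 1` and `z = −1`. On these two
branches `u, v, w` become `(0, 2y, x)` and `(−2y, 0, x)`; hence `φ(p) = 0` forces
`p(0, v, w) = 0 = p(u, 0, w)`, i.e. `uv ∣ p`. Conversely, if `(f, g)` lies in the fiber product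
then `f(x, 0, ±1) = g(x)`, and `f(w, v/2, 1) + f(w, −u/2, −1) − g(w)` is a preimage: on each
branch one summand recovers `f` while the other cancels against `g`.
-/

/-- The ideal `(z² − 1) ⊂ K[x,y,z]` (variables `X 0 = x`, `X 1 = y`, `X 2 = z`). -/
noncomputable def I4 (K : Type*) [Field K] : Ideal (MvPolynomial (Fin 3) K) :=
  Ideal.span {MvPolynomial.X 2 ^ 2 - 1}

/-- The ideal `(z² − 1, y) ⊂ K[x,y,z]`. -/
noncomputable def J4 (K : Type*) [Field K] : Ideal (MvPolynomial (Fin 3) K) :=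
  Ideal.span {MvPolynomial.X 2 ^ 2 - 1, MvPolynomial.X 1}

/-- `Ā = K[x,y,z]/(z² − 1)`. -/
abbrev Abar4 (K : Type*) [Field K] := MvPolynomial (Fin 3) K ⧸ I4 K

/-- The `K`-algebra map `K[u,v,w] → Ā × K[t]`, `u ↦ (y(z−1), 0)`, `v ↦ (y(z+1), 0)`,
`w ↦ (x, t)`. -/
noncomputable def phi4 (K : Type*) [Field K] :
    MvPolynomial (Fin 3) K →ₐ[K] Abar4 K × Polynomial K :=
  MvPolynomial.aeval
    ![(Ideal.Quotient.mk (I4 K) (MvPolynomial.X 1 * (MvPolynomial.X 2 - 1)), 0),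
      (Ideal.Quotient.mk (I4 K) (MvPolynomial.X 1 * (MvPolynomial.X 2 + 1)), 0),
      (Ideal.Quotient.mk (I4 K) (MvPolynomial.X 0), Polynomial.X)]

namespace MvPolynomial

variable {σ R : Type*} [CommRing R] [DecidableEq σ]

theorem X_sub_C_dvd_sub_aeval_update (i : σ) (a : R) (p : MvPolynomial σ R) :
    X i - C a ∣ p - aeval (Function.update X i (C a)) p := by
  rw [← Ideal.mem_span_singleton, ← Ideal.Quotient.eq]
  have : (Ideal.Quotient.mkₐ R (Ideal.span {X i - C a})).comp
      (aeval (Function.update X i (C a))) = Ideal.Quotient.mkₐ R _ := by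
    refine algHom_ext fun j => ?_
    rcases eq_or_ne j i with rfl | hj
    · simpa [Ideal.Quotient.eq, Ideal.mem_span_singleton] using dvd_sub_comm.mp dvd_rfl
    · simp [hj]
  exact (AlgHom.congr_fun this p).symm

theorem X_sub_C_dvd_of_aeval_update_eq_zero {i : σ} {a : R} {p : MvPolynomial σ R}
    (h : aeval (Function.update X i (C a)) p = 0) : X i - C a ∣ p := by
  simpa only [h, sub_zero] using X_sub_C_dvd_sub_aeval_update i a p

theorem mul_X_sub_C_dvd_of_aeval_update_eq_zero [IsDomain R] {i j : σ} {a b : R}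
    {p : MvPolynomial σ R} (hi : aeval (Function.update X i (C a)) p = 0)
    (hj : aeval (Function.update X j (C b)) p = 0)
    (hij : aeval (Function.update X j (C b)) (X i - C a) ≠ 0) :
    (X i - C a) * (X j - C b) ∣ p := by
  obtain ⟨q, rfl⟩ := X_sub_C_dvd_of_aeval_update_eq_zero hi
  rw [map_mul, mul_eq_zero, or_iff_right hij] at hj
  exact mul_dvd_mul_left _ (X_sub_C_dvd_of_aeval_update_eq_zero hj)

end MvPolynomial

theorem Ideal.Quotient.factor_mk_eq_aeval_iff {R S : Type*} [CommRing R] [CommRing S]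
    [Algebra R S] {I J : Ideal S} (h : I ≤ J) (x f : S) (g : Polynomial R) :
    Ideal.Quotient.factor h (Ideal.Quotient.mk I f) =
        Polynomial.aeval (Ideal.Quotient.mk J x) g ↔ f - Polynomial.aeval x g ∈ J := by
  rw [Ideal.Quotient.factor_mk, ← Ideal.Quotient.mkₐ_eq_mk R, Polynomial.aeval_algHom_apply,
    Ideal.Quotient.mkₐ_eq_mk, Ideal.Quotient.eq]

namespace Phi4

open MvPolynomial

variable (K : Type*) [Field K]

noncomputable def phi4Fst : MvPolynomial (Fin 3) K →ₐ[K] MvPolynomial (Fin 3) K :=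
  aeval ![X 1 * (X 2 - 1), X 1 * (X 2 + 1), X 0]

noncomputable def phi4Snd : MvPolynomial (Fin 3) K →ₐ[K] Polynomial K :=
  aeval ![0, 0, Polynomial.X]

noncomputable def liftOne : MvPolynomial (Fin 3) K →ₐ[K] MvPolynomial (Fin 3) K :=
  aeval ![X 2, C 2⁻¹ * X 1, 1]

noncomputable def liftNegOne : MvPolynomial (Fin 3) K →ₐ[K] MvPolynomial (Fin 3) K :=
  aeval ![X 2, -(C 2⁻¹ * X 0), -1]

variable {K}

noncomputable def evalZ (c : K) : MvPolynomial (Fin 3) K →ₐ[K] MvPolynomial (Fin 3) K :=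
  aeval (Function.update X 2 (C c))

noncomputable def evalLine (c : K) : MvPolynomial (Fin 3) K →ₐ[K] Polynomial K :=
  aeval ![Polynomial.X, 0, Polynomial.C c]

theorem phi4_apply (p : MvPolynomial (Fin 3) K) :
    phi4 K p = (Ideal.Quotient.mk (I4 K) (phi4Fst K p), phi4Snd K p) := by
  have : phi4 K = ((Ideal.Quotient.mkₐ K (I4 K)).comp (phi4Fst K)).prod (phi4Snd K) :=
    algHom_ext fun i => by fin_cases i <;> simp [phi4, phi4Fst, phi4Snd]
  rw [this]
  rfl

theorem mem_I4_iff (h2 : (2 : K) ≠ 0) {f : MvPolynomial (Fin 3) K} :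
    f ∈ I4 K ↔ evalZ 1 f = 0 ∧ evalZ (-1) f = 0 := by
  have hfactor : (X 2 ^ 2 - 1 : MvPolynomial (Fin 3) K) = (X 2 - C 1) * (X 2 - C (-1)) := by
    simp only [map_one, map_neg]
    ring
  rw [I4, Ideal.mem_span_singleton, hfactor]
  constructor
  · rintro ⟨q, rfl⟩
    simp [evalZ]
  · rintro ⟨h1, h1'⟩
    refine mul_X_sub_C_dvd_of_aeval_update_eq_zero h1 h1' ?_
    rw [map_sub, aeval_X, Function.update_self, aeval_C, algebraMap_eq, ← map_sub, Ne, C_eq_zero]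
    intro h
    apply h2
    linear_combination -h

theorem C_inv_two_mul_two {σ : Type*} (h2 : (2 : K) ≠ 0) :
    (C 2⁻¹ : MvPolynomial σ K) * 2 = 1 := by
  rw [← map_ofNat C 2, ← map_mul, inv_mul_cancel₀ h2, map_one]

theorem liftOne_evalZ_phi4Fst (h2 : (2 : K) ≠ 0) (p : MvPolynomial (Fin 3) K) :
    liftOne K (evalZ 1 (phi4Fst K p)) = aeval (Function.update X 0 (C 0)) p := by
  rw [← AlgHom.comp_apply, ← AlgHom.comp_apply]
  congr 1
  refine algHom_ext fun i => ?_
  fin_cases i <;> simp [evalZ, phi4Fst, liftOne, Function.update]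
  linear_combination X 1 * C_inv_two_mul_two h2

theorem liftNegOne_evalZ_phi4Fst (h2 : (2 : K) ≠ 0) (p : MvPolynomial (Fin 3) K) :
    liftNegOne K (evalZ (-1) (phi4Fst K p)) = aeval (Function.update X 1 (C 0)) p := by
  rw [← AlgHom.comp_apply, ← AlgHom.comp_apply]
  congr 1
  refine algHom_ext fun i => ?_
  fin_cases i <;> simp [evalZ, phi4Fst, liftNegOne, Function.update]
  linear_combination X 0 * C_inv_two_mul_two h2

theorem evalZ_phi4Fst_liftOne (h2 : (2 : K) ≠ 0) (f : MvPolynomial (Fin 3) K) :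
    evalZ 1 (phi4Fst K (liftOne K f)) = evalZ 1 f := by
  rw [← AlgHom.comp_apply, ← AlgHom.comp_apply]
  congr 1
  refine algHom_ext fun i => ?_
  fin_cases i <;> simp [evalZ, phi4Fst, liftOne, Function.update]
  linear_combination X 1 * C_inv_two_mul_two h2

theorem evalZ_phi4Fst_liftNegOne (h2 : (2 : K) ≠ 0) (f : MvPolynomial (Fin 3) K) :
    evalZ (-1) (phi4Fst K (liftNegOne K f)) = evalZ (-1) f := by
  rw [← AlgHom.comp_apply, ← AlgHom.comp_apply]
  congr 1
  refine algHom_ext fun i => ?_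
  fin_cases i <;> simp [evalZ, phi4Fst, liftNegOne, Function.update]
  linear_combination X 1 * C_inv_two_mul_two h2

theorem evalZ_neg_one_phi4Fst_liftOne (f : MvPolynomial (Fin 3) K) :
    evalZ (-1) (phi4Fst K (liftOne K f)) = Polynomial.aeval (X 0) (evalLine 1 f) := by
  rw [← AlgHom.comp_apply, ← AlgHom.comp_apply, ← AlgHom.comp_apply]
  congr 1
  refine algHom_ext fun i => ?_
  fin_cases i <;> simp [evalZ, phi4Fst, liftOne, evalLine, Function.update]

theorem evalZ_one_phi4Fst_liftNegOne (f : MvPolynomial (Fin 3) K) :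
    evalZ 1 (phi4Fst K (liftNegOne K f)) = Polynomial.aeval (X 0) (evalLine (-1) f) := by
  rw [← AlgHom.comp_apply, ← AlgHom.comp_apply, ← AlgHom.comp_apply]
  congr 1
  refine algHom_ext fun i => ?_
  fin_cases i <;> simp [evalZ, phi4Fst, liftNegOne, evalLine, Function.update]

theorem evalZ_phi4Fst_aeval_X_two (c : K) (g : Polynomial K) :
    evalZ c (phi4Fst K (Polynomial.aeval (X 2) g)) = Polynomial.aeval (X 0) g := by
  rw [← Polynomial.aeval_algHom_apply, ← Polynomial.aeval_algHom_apply]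
  simp [evalZ, phi4Fst]

theorem phi4Snd_liftOne (f : MvPolynomial (Fin 3) K) :
    phi4Snd K (liftOne K f) = evalLine 1 f := by
  rw [← AlgHom.comp_apply]
  congr 1
  refine algHom_ext fun i => ?_
  fin_cases i <;> simp [phi4Snd, liftOne, evalLine]

theorem phi4Snd_liftNegOne (f : MvPolynomial (Fin 3) K) :
    phi4Snd K (liftNegOne K f) = evalLine (-1) f := by
  rw [← AlgHom.comp_apply]
  congr 1
  refine algHom_ext fun i => ?_
  fin_cases i <;> simp [phi4Snd, liftNegOne, evalLine]

theorem phi4Snd_aeval_X_two (g : Polynomial K) : phi4Snd K (Polynomial.aeval (X 2) g) = g := by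
  rw [← Polynomial.aeval_algHom_apply]
  simp [phi4Snd]

theorem mk_J4_X_one : Ideal.Quotient.mk (J4 K) (X 1) = 0 :=
  Ideal.Quotient.eq_zero_iff_mem.mpr (Ideal.subset_span (Set.mem_insert_of_mem _ rfl))

theorem phi4Fst_sub_aeval_phi4Snd_mem_J4 (p : MvPolynomial (Fin 3) K) :
    phi4Fst K p - Polynomial.aeval (X 0) (phi4Snd K p) ∈ J4 K := by
  rw [← Ideal.Quotient.eq]
  have : (Ideal.Quotient.mkₐ K (J4 K)).comp (phi4Fst K) =
      ((Ideal.Quotient.mkₐ K (J4 K)).comp (Polynomial.aeval (X 0))).comp (phi4Snd K) := by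
    refine algHom_ext fun i => ?_
    fin_cases i <;> simp [phi4Fst, phi4Snd, mk_J4_X_one]
  exact AlgHom.congr_fun this p

theorem evalLine_eq_of_sub_mem_J4 {c : K} (hc : c ^ 2 = 1) {f : MvPolynomial (Fin 3) K}
    {g : Polynomial K} (h : f - Polynomial.aeval (X 0) g ∈ J4 K) : evalLine c f = g := by
  have hJ : J4 K ≤ RingHom.ker (evalLine c) := by
    rw [J4, Ideal.span_le, Set.insert_subset_iff, Set.singleton_subset_iff]
    simp [evalLine, ← Polynomial.C_pow, hc]
  have := hJ h
  rw [RingHom.mem_ker, map_sub, sub_eq_zero, ← Polynomial.aeval_algHom_apply] at this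
  simpa [evalLine] using this

theorem ker_phi4 (h2 : (2 : K) ≠ 0) :
    RingHom.ker (phi4 K) = Ideal.span {X 0 * X 1} := by
  refine le_antisymm (fun p hp => ?_) ?_
  · have hI : phi4Fst K p ∈ I4 K := by
      rw [RingHom.mem_ker, phi4_apply] at hp
      exact Ideal.Quotient.eq_zero_iff_mem.mp (congrArg Prod.fst hp)
    obtain ⟨hz, hz'⟩ := (mem_I4_iff h2).mp hI
    have hu : aeval (Function.update X 0 (C (0 : K))) p = 0 := by
      rw [← liftOne_evalZ_phi4Fst h2, hz, map_zero]
    have hv : aeval (Function.update X 1 (C (0 : K))) p = 0 := by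
      rw [← liftNegOne_evalZ_phi4Fst h2, hz', map_zero]
    simpa [Ideal.mem_span_singleton] using
      mul_X_sub_C_dvd_of_aeval_update_eq_zero hu hv (by simp [Function.update, X_ne_zero])
  · rw [Ideal.span_le, Set.singleton_subset_iff, SetLike.mem_coe, RingHom.mem_ker, phi4_apply,
      Prod.mk_eq_zero, Ideal.Quotient.eq_zero_iff_mem, I4, Ideal.mem_span_singleton]
    exact ⟨⟨X 1 ^ 2, by simp [phi4Fst]; ring⟩, by simp [phi4Snd]⟩

theorem range_phi4 (h2 : (2 : K) ≠ 0) (hIJ : I4 K ≤ J4 K) :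
    Set.range (phi4 K) = {fg | Ideal.Quotient.factor hIJ fg.1 =
      Polynomial.aeval (Ideal.Quotient.mk (J4 K) (X 0)) fg.2} := by
  ext ⟨a, g⟩
  obtain ⟨f, rfl⟩ := Ideal.Quotient.mk_surjective a
  rw [Set.mem_ofPred, Ideal.Quotient.factor_mk_eq_aeval_iff]
  constructor
  · rintro ⟨p, hp⟩
    rw [phi4_apply, Prod.mk.injEq, Ideal.Quotient.eq] at hp
    obtain ⟨hpf, rfl⟩ := hp
    convert Ideal.sub_mem _ (phi4Fst_sub_aeval_phi4Snd_mem_J4 p) (hIJ hpf) using 1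
    ring
  · intro hfg
    have hg := evalLine_eq_of_sub_mem_J4 (one_pow 2) hfg
    have hg' := evalLine_eq_of_sub_mem_J4 (c := -1) (by norm_num) hfg
    refine ⟨liftOne K f + liftNegOne K f - Polynomial.aeval (X 2) g, ?_⟩
    rw [phi4_apply, Prod.mk.injEq, Ideal.Quotient.eq, mem_I4_iff h2]
    simp only [map_add, map_sub, evalZ_phi4Fst_liftOne h2, evalZ_phi4Fst_liftNegOne h2,
      evalZ_neg_one_phi4Fst_liftOne, evalZ_one_phi4Fst_liftNegOne, evalZ_phi4Fst_aeval_X_two,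
      phi4Snd_liftOne, phi4Snd_liftNegOne, phi4Snd_aeval_X_two, hg, hg']
    exact ⟨⟨by ring, by ring⟩, by ring⟩

end Phi4

theorem stmt_4 (K : Type*) [Field K] (h2 : (2 : K) ≠ 0) :
    RingHom.ker (phi4 K) = Ideal.span {MvPolynomial.X 0 * MvPolynomial.X 1} ∧
    Set.range (phi4 K) =
      {fg : Abar4 K × Polynomial K |
        Ideal.Quotient.factor (S := I4 K) (T := J4 K)
            (Ideal.span_mono (Set.singleton_subset_iff.mpr (Set.mem_insert _ _))) fg.1 =
          Polynomial.aeval (Ideal.Quotient.mk (J4 K) (MvPolynomial.X 0)) fg.2} :=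
  ⟨Phi4.ker_phi4 h2, Phi4.range_phi4 h2 _⟩
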